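/- arXiv:0808.1430 — 2 statements merged into one kernel-verified Lean document; each statement's English description precedes it below -/
import Mathlib

section
/- Let G be a Garside group of finite type with positive monoid P and Garside element Δ. For every x ∈ G one has inf(𝔰(x)) ≥ inf(x), sup(𝔰(x)) ≤ sup(x), and ℓ(𝔰(x)) ≤ ℓ(x), where 𝔰 denotes cyclic sliding. -/
namespace GarsidePaper

/-- A Garside structure of finite type on a group `G`: a positive submonoid `P` with
`P ∩ P⁻¹ = {1}`, a Garside element `Δ ∈ P`, the prefix order `a ≼ b ↔ a⁻¹b ∈ P`
a lattice order (with meet `wedge` and join `vee`), the simple elements `[1,Δ]`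
generating `G` and being finite, `Δ⁻¹PΔ = P`, a finite norm on positive elements,
and the infimum and supremum functions `inf`, `sup` characterised by
`Δ^(inf x) ≼ x ≼ Δ^(sup x)` with `inf x` maximal and `sup x` minimal. -/
structure Garside (G : Type*) [Group G] where
  P : Submonoid G
  Δ : G
  purity : ∀ a : G, a ∈ P → a⁻¹ ∈ P → a = 1
  delta_mem : Δ ∈ P
  wedge : G → G → G
  vee : G → G → G
  wedge_le_left : ∀ a b : G, (wedge a b)⁻¹ * a ∈ P
  wedge_le_right : ∀ a b : G, (wedge a b)⁻¹ * b ∈ P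
  le_wedge : ∀ a b c : G, c⁻¹ * a ∈ P → c⁻¹ * b ∈ P → c⁻¹ * wedge a b ∈ P
  le_vee_left : ∀ a b : G, a⁻¹ * vee a b ∈ P
  le_vee_right : ∀ a b : G, b⁻¹ * vee a b ∈ P
  vee_le : ∀ a b c : G, a⁻¹ * c ∈ P → b⁻¹ * c ∈ P → (vee a b)⁻¹ * c ∈ P
  simples_generate : Subgroup.closure {a : G | a ∈ P ∧ a⁻¹ * Δ ∈ P} = (⊤ : Subgroup G)
  conj_pos : ∀ a : G, a ∈ P → Δ⁻¹ * a * Δ ∈ P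
  norm : G → ℕ
  norm_exists : ∀ x : G, x ∈ P → x ≠ 1 →
    ∃ l : List G, (∀ s ∈ l, s ∈ P ∧ s ≠ 1) ∧ l.prod = x ∧ l.length = norm x
  norm_max : ∀ x : G, x ∈ P → x ≠ 1 →
    ∀ l : List G, (∀ s ∈ l, s ∈ P ∧ s ≠ 1) → l.prod = x → l.length ≤ norm x
  simples_finite : Set.Finite {a : G | a ∈ P ∧ a⁻¹ * Δ ∈ P}
  inf : G → ℤ
  sup : G → ℤ
  inf_le : ∀ x : G, (Δ ^ inf x)⁻¹ * x ∈ P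
  inf_max : ∀ (x : G) (p : ℤ), (Δ ^ p)⁻¹ * x ∈ P → p ≤ inf x
  le_sup : ∀ x : G, x⁻¹ * Δ ^ sup x ∈ P
  sup_min : ∀ (x : G) (q : ℤ), x⁻¹ * Δ ^ q ∈ P → sup x ≤ q

namespace Garside

variable {G : Type*} [Group G]

/-- The prefix order `a ≼ b`. -/
def le (S : Garside G) (a b : G) : Prop := a⁻¹ * b ∈ S.P

/-- The canonical length `ℓ(x) = sup(x) - inf(x)`. -/
def len (S : Garside G) (x : G) : ℤ := S.sup x - S.inf x

/-- The initial factor `ι(x) = (x Δ^(-inf x)) ∧ Δ`. -/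
def iota (S : Garside G) (x : G) : G := S.wedge (x * S.Δ ^ (-S.inf x)) S.Δ

/-- The preferred prefix `𝔭(x) = ι(x) ∧ ι(x⁻¹)`. -/
def pp (S : Garside G) (x : G) : G := S.wedge (S.iota x) (S.iota x⁻¹)

/-- Cyclic sliding `𝔰(x) = 𝔭(x)⁻¹ x 𝔭(x)`. -/
def sl (S : Garside G) (x : G) : G := (S.pp x)⁻¹ * x * S.pp x

/-- The final factor `φ(x) = (Δ^(sup x - 1) ∧ x)⁻¹ x`. -/
def phi (S : Garside G) (x : G) : G := (S.wedge (S.Δ ^ (S.sup x - 1)) x)⁻¹ * x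

/-- Conjugation by `Δ`: `τ(x) = Δ⁻¹ x Δ`. -/
def tau (S : Garside G) (x : G) : G := S.Δ⁻¹ * x * S.Δ

/-- Cycling `c(x) = ι(x)⁻¹ x ι(x)`. -/
def cyc (S : Garside G) (x : G) : G := (S.iota x)⁻¹ * x * S.iota x

/-- Decycling `d(x) = φ(x) x φ(x)⁻¹`. -/
def dec (S : Garside G) (x : G) : G := S.phi x * x * (S.phi x)⁻¹

/-- The transport `α^{(1)} = 𝔭(x)⁻¹ α 𝔭(x^α)` of `α` at `x`. -/
def transport (S : Garside G) (x α : G) : G := (S.pp x)⁻¹ * α * S.pp (α⁻¹ * x * α)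

/-- The iterated transport: `itTransport x i α = α^{(i)}`, the transport of `α^{(i-1)}`
at `𝔰^{i-1}(x)`, with `α^{(0)} = α`. -/
def itTransport (S : Garside G) (x : G) : ℕ → G → G
  | 0, α => α
  | i + 1, α => S.transport ((S.sl)^[i] x) (S.itTransport x i α)

/-- `𝔓_i(x) = 𝔭(x) 𝔭(𝔰(x)) ⋯ 𝔭(𝔰^{i-1}(x))`, with `𝔓₀(x) = 1`. -/
def PP (S : Garside G) (x : G) : ℕ → G
  | 0 => 1
  | i + 1 => S.PP x i * S.pp ((S.sl)^[i] x)

/-- The summit set `SS(x)`. -/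
def SS (S : Garside G) (x : G) : Set G :=
  {y | IsConj x y ∧ ∀ z : G, IsConj x z → S.inf z ≤ S.inf y}

/-- The super summit set `SSS(x)`. -/
def SSS (S : Garside G) (x : G) : Set G :=
  {y | IsConj x y ∧ (∀ z : G, IsConj x z → S.inf z ≤ S.inf y) ∧
       (∀ z : G, IsConj x z → S.sup y ≤ S.sup z)}

/-- The ultra summit set `USS(x)`. -/
def USS (S : Garside G) (x : G) : Set G :=
  {y | y ∈ S.SSS x ∧ ∃ m : ℕ, 1 ≤ m ∧ (S.cyc)^[m] y = y}

/-- The reduced super summit set `RSSS(x)`. -/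
def RSSS (S : Garside G) (x : G) : Set G :=
  {y | IsConj x y ∧ (∃ m : ℕ, 1 ≤ m ∧ (S.cyc)^[m] y = y) ∧
       (∃ n : ℕ, 1 ≤ n ∧ (S.dec)^[n] y = y)}

/-- The set of sliding circuits `SC(x)`. -/
def SC (S : Garside G) (x : G) : Set G :=
  {y | IsConj x y ∧ ∃ m : ℕ, 1 ≤ m ∧ (S.sl)^[m] y = y}

/-!
`𝔭(x)` is a prefix of both `ι(x) ≼ x Δ^{-inf x}` and `ι(x⁻¹) ≼ x⁻¹ Δ^{sup x}`. Conjugating by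
`Δ^{inf x}` turns the first relation into `Δ^{inf x} ≼ 𝔰(x)`, and the second one, with
`inf(y⁻¹) = -sup(y)`, into `𝔰(x) ≼ Δ^{sup x}`.

Both steps need the inclusion `Δ⁻¹ P Δ ⊆ P` to be an equality. Conjugation by `Δ⁻¹` is
injective on the finite set of simples, hence permutes it. Every `a ∈ P` is then a product of
simples: since the simples generate `G`, `Δ^k a` is a product of simples for some `k`, and the
factors `Δ` can be cancelled one at a time because left division of a product of simples by a
simple prefix stays a product of simples.
-/

variable {S : Garside G}

variable (S) in
def simples : Set G := {a : G | a ∈ S.P ∧ a⁻¹ * S.Δ ∈ S.P}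

lemma delta_mem_simples : S.Δ ∈ S.simples :=
  ⟨S.delta_mem, by simp⟩

lemma inv_mul_mem_simples {u j : G} (hu : u ∈ S.P) (hj : j ∈ S.simples)
    (h : u⁻¹ * j ∈ S.P) : u⁻¹ * j ∈ S.simples := by
  refine ⟨h, ?_⟩
  convert S.P.mul_mem hj.2 (S.conj_pos u hu) using 1
  group

lemma vee_mem_simples {s t : G} (hs : s ∈ S.simples) (ht : t ∈ S.simples) :
    S.vee s t ∈ S.simples := by
  refine ⟨?_, S.vee_le s t S.Δ hs.2 ht.2⟩
  simpa using S.P.mul_mem hs.1 (S.le_vee_left s t)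

lemma delta_inv_conj_mem_simples {s : G} (hs : s ∈ S.simples) :
    S.Δ⁻¹ * s * S.Δ ∈ S.simples := by
  refine ⟨S.conj_pos s hs.1, ?_⟩
  convert S.conj_pos _ hs.2 using 1
  group

lemma delta_conj_mem_simples {s : G} (hs : s ∈ S.simples) :
    S.Δ * s * S.Δ⁻¹ ∈ S.simples := by
  have hinj : Set.InjOn (fun a => S.Δ⁻¹ * a * S.Δ) S.simples := fun a _ b _ hab => by
    simpa using hab
  obtain ⟨t, ht, rfl⟩ := (S.simples_finite.injOn_iff_bijOn_of_mapsTo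
    (fun _ ha => delta_inv_conj_mem_simples ha)).mp hinj |>.surjOn hs
  show S.Δ * (S.Δ⁻¹ * t * S.Δ) * S.Δ⁻¹ ∈ S.simples
  rwa [show S.Δ * (S.Δ⁻¹ * t * S.Δ) * S.Δ⁻¹ = t by group]

variable (S) in
def simplesMonoid : Submonoid G := Submonoid.closure S.simples

lemma mem_simplesMonoid_of_mem_simples {s : G} (hs : s ∈ S.simples) : s ∈ S.simplesMonoid :=
  Submonoid.subset_closure hs

lemma simplesMonoid_le : S.simplesMonoid ≤ S.P :=
  Submonoid.closure_le.mpr fun _ hs => hs.1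

lemma delta_conj_mem_simplesMonoid {m : G} (hm : m ∈ S.simplesMonoid) :
    S.Δ * m * S.Δ⁻¹ ∈ S.simplesMonoid := by
  induction hm using Submonoid.closure_induction with
  | mem s hs => exact mem_simplesMonoid_of_mem_simples (delta_conj_mem_simples hs)
  | one => simp
  | mul a b _ _ ha hb => convert mul_mem ha hb using 1; group

lemma delta_pow_conj_mem_simplesMonoid (k : ℕ) {m : G} (hm : m ∈ S.simplesMonoid) :
    S.Δ ^ k * m * (S.Δ ^ k)⁻¹ ∈ S.simplesMonoid := by
  induction k with
  | zero => simpa using hm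
  | succ k ih =>
    convert delta_conj_mem_simplesMonoid ih using 1
    rw [pow_succ']
    group

lemma exists_delta_pow_mul_mem_simplesMonoid (g : G) :
    ∃ k : ℕ, S.Δ ^ k * g ∈ S.simplesMonoid := by
  have hg : g ∈ Subgroup.closure S.simples := S.simples_generate ▸ Subgroup.mem_top g
  induction hg using Subgroup.closure_induction_left with
  | one => exact ⟨0, by simp⟩
  | mul_left s hs y _ ih =>
    obtain ⟨k, hk⟩ := ih
    refine ⟨k, ?_⟩
    convert mul_mem (delta_pow_conj_mem_simplesMonoid k (mem_simplesMonoid_of_mem_simples hs)) hk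
      using 1
    group
  | inv_mul_cancel s hs y _ ih =>
    obtain ⟨k, hk⟩ := ih
    have hΔs : S.Δ * s⁻¹ ∈ S.simplesMonoid := by
      convert mem_simplesMonoid_of_mem_simples
        (delta_conj_mem_simples (inv_mul_mem_simples hs.1 delta_mem_simples hs.2)) using 1
      group
    refine ⟨k + 1, ?_⟩
    convert mul_mem (delta_pow_conj_mem_simplesMonoid k hΔs) hk using 1
    rw [pow_succ]
    group

/-- For `s ≼ t w` with `s, t` simple, `t' = t⁻¹ (s ∨ t)` is simple with `t' ≼ w`, and
`s⁻¹ t w = (s⁻¹ (s ∨ t)) (t'⁻¹ w)`. -/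
lemma inv_mul_mem_simplesMonoid {s y : G} (hs : s ∈ S.simples) (hy : y ∈ S.simplesMonoid)
    (h : s⁻¹ * y ∈ S.P) : s⁻¹ * y ∈ S.simplesMonoid := by
  induction hy using Submonoid.closure_induction_left generalizing s with
  | one =>
    rw [S.purity s hs.1 (by simpa using h)]
    simp
  | mul_left t ht w hw ih =>
    have hj := vee_mem_simples hs ht
    have htj : t⁻¹ * S.vee s t ∈ S.simples :=
      inv_mul_mem_simples ht.1 hj (S.le_vee_right s t)
    have hw' : (t⁻¹ * S.vee s t)⁻¹ * w ∈ S.P := by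
      convert S.vee_le s t (t * w) h (by simpa using simplesMonoid_le hw) using 1
      group
    rw [show s⁻¹ * (t * w) = s⁻¹ * S.vee s t * ((t⁻¹ * S.vee s t)⁻¹ * w) by group]
    exact mul_mem (mem_simplesMonoid_of_mem_simples
      (inv_mul_mem_simples hs.1 hj (S.le_vee_left s t))) (ih htj hw')

lemma mem_simplesMonoid_of_delta_pow_mul_mem {a : G} (ha : a ∈ S.P) (k : ℕ)
    (h : S.Δ ^ k * a ∈ S.simplesMonoid) : a ∈ S.simplesMonoid := by
  induction k with
  | zero => simpa using h
  | succ k ih =>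
    apply ih
    have hpos : S.Δ⁻¹ * (S.Δ ^ (k + 1) * a) ∈ S.P := by
      convert S.P.mul_mem (pow_mem S.delta_mem k) ha using 1
      rw [pow_succ']
      group
    convert inv_mul_mem_simplesMonoid delta_mem_simples h hpos using 1
    rw [pow_succ']
    group

lemma mem_simplesMonoid {a : G} (ha : a ∈ S.P) : a ∈ S.simplesMonoid := by
  obtain ⟨k, hk⟩ := exists_delta_pow_mul_mem_simplesMonoid (S := S) a
  exact mem_simplesMonoid_of_delta_pow_mul_mem ha k hk

lemma delta_inv_conj_mem_iff {a : G} : S.Δ⁻¹ * a * S.Δ ∈ S.P ↔ a ∈ S.P := by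
  refine ⟨fun h => ?_, S.conj_pos a⟩
  simpa [mul_assoc] using simplesMonoid_le (delta_conj_mem_simplesMonoid (mem_simplesMonoid h))

lemma delta_zpow_conj_mem_iff (k : ℤ) {a : G} :
    (S.Δ ^ k)⁻¹ * a * S.Δ ^ k ∈ S.P ↔ a ∈ S.P := by
  induction k using Int.induction_on generalizing a with
  | zero => simp
  | succ k ih =>
    rw [← ih (a := a), ← delta_inv_conj_mem_iff (a := (S.Δ ^ (k : ℤ))⁻¹ * a * S.Δ ^ (k : ℤ)),
      zpow_add_one]
    simp only [mul_inv_rev, mul_assoc]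
  | pred k ih =>
    rw [← ih (a := a), ← delta_inv_conj_mem_iff (a := (S.Δ ^ (-(k : ℤ) - 1))⁻¹ * a * _),
      zpow_sub_one]
    simp only [mul_inv_rev, inv_inv, mul_assoc, inv_mul_cancel_left, inv_mul_cancel, mul_one]

lemma mul_delta_zpow_neg_mem_iff (x : G) (k : ℤ) :
    x * S.Δ ^ (-k) ∈ S.P ↔ (S.Δ ^ k)⁻¹ * x ∈ S.P := by
  rw [← delta_zpow_conj_mem_iff (-k) (a := (S.Δ ^ k)⁻¹ * x), zpow_neg, inv_inv,
    mul_inv_cancel_left]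

lemma inf_inv_eq_neg_sup (x : G) : S.inf x⁻¹ = -S.sup x := by
  refine le_antisymm ?_ (S.inf_max _ _ ?_)
  · have := S.sup_min x _ ((mul_delta_zpow_neg_mem_iff x⁻¹ _).mpr (S.inf_le x⁻¹))
    omega
  · rw [← mul_delta_zpow_neg_mem_iff, neg_neg]
    exact S.le_sup x

lemma iota_mem (x : G) : S.iota x ∈ S.P := by
  simpa [iota] using S.le_wedge _ _ 1
    (by simpa using (mul_delta_zpow_neg_mem_iff x _).mpr (S.inf_le x)) (by simpa using S.delta_mem)

lemma pp_mem (x : G) : S.pp x ∈ S.P := by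
  simpa [pp] using S.le_wedge _ _ 1 (by simpa using iota_mem x) (by simpa using iota_mem x⁻¹)

lemma inf_le_inf_conj {p y : G} (hp : p ∈ S.P) (h : p⁻¹ * S.iota y ∈ S.P) :
    S.inf y ≤ S.inf (p⁻¹ * y * p) := by
  apply S.inf_max
  have hpy : p⁻¹ * (y * S.Δ ^ (-S.inf y)) ∈ S.P := by
    convert S.P.mul_mem h (S.wedge_le_left (y * S.Δ ^ (-S.inf y)) S.Δ) using 1
    simp only [iota]
    group
  convert S.P.mul_mem ((delta_zpow_conj_mem_iff (S.inf y)).mpr hpy) hp using 1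
  group

end Garside

open Garside in
theorem statement0 {G : Type*} [Group G] (S : Garside G) (x : G) :
    S.inf x ≤ S.inf (S.sl x) ∧ S.sup (S.sl x) ≤ S.sup x ∧
      S.len (S.sl x) ≤ S.len x := by
  have hinf : S.inf x ≤ S.inf (S.sl x) := inf_le_inf_conj (pp_mem x) (S.wedge_le_left _ _)
  have hsup : S.sup (S.sl x) ≤ S.sup x := by
    have := inf_le_inf_conj (y := x⁻¹) (pp_mem x) (S.wedge_le_right _ _)
    rw [← neg_le_neg_iff, ← inf_inv_eq_neg_sup, ← inf_inv_eq_neg_sup]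
    simpa [sl, mul_assoc] using this
  exact ⟨hinf, hsup, by unfold len; omega⟩

end GarsidePaper
end

section
/- Let G be a Garside group of finite type and x ∈ G. If x^α ∈ SSS(x) and x^β ∈ SSS(x) for elements α, β ∈ G, then x^{α∧β} ∈ SSS(x). -/
namespace GarsidePaper

namespace Garside

variable {G : Type*} [Group G] (S : Garside G)

lemma aux_le_trans {a b c : G} (h1 : a⁻¹ * b ∈ S.P) (h2 : b⁻¹ * c ∈ S.P) :
    a⁻¹ * c ∈ S.P := by
  simpa [mul_assoc] using S.P.mul_mem h1 h2

lemma zpow_nonneg_mem {n : ℤ} (hn : 0 ≤ n) : S.Δ ^ n ∈ S.P := by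
  lift n to ℕ using hn
  rw [zpow_natCast]
  exact S.P.pow_mem S.delta_mem n

lemma zpow_le_zpow' {s t : ℤ} (h : s ≤ t) : (S.Δ ^ s)⁻¹ * S.Δ ^ t ∈ S.P := by
  have he : (S.Δ ^ s)⁻¹ * S.Δ ^ t = S.Δ ^ (t - s) := by
    rw [← zpow_neg, ← zpow_add]
    ring_nf
  rw [he]
  exact S.zpow_nonneg_mem (by omega)

lemma conj_pow (m : ℕ) {p : G} (hp : p ∈ S.P) : (S.Δ ^ m)⁻¹ * p * S.Δ ^ m ∈ S.P := by
  induction m with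
  | zero => simpa using hp
  | succ n ih =>
      have := S.conj_pos _ ih
      simpa [pow_succ, mul_inv_rev, mul_assoc] using this

lemma exists_central : ∃ M : ℕ, 1 ≤ M ∧ ∀ g : G, S.Δ ^ M * g = g * S.Δ ^ M := by
  classical
  set Sp : Set G := {a : G | a ∈ S.P ∧ a⁻¹ * S.Δ ∈ S.P} with hSp
  set τ : G → G := fun g => S.Δ⁻¹ * g * S.Δ with hτ
  have hτinj : Function.Injective τ := by
    intro a b h
    simp only [hτ] at h
    exact mul_left_cancel (mul_right_cancel h)
  have hτmem : ∀ a ∈ Sp, τ a ∈ Sp := by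
    rintro a ⟨h1, h2⟩
    refine ⟨S.conj_pos a h1, ?_⟩
    have := S.conj_pos _ h2
    simpa [hτ, mul_inv_rev, mul_assoc] using this
  have hiter : ∀ (n : ℕ), ∀ a ∈ Sp, τ^[n] a ∈ Sp := by
    intro n
    induction n with
    | zero => intro a ha; simpa using ha
    | succ n ih =>
        intro a ha
        rw [Function.iterate_succ_apply']
        exact hτmem _ (ih a ha)
  have hfin : Set.Finite Sp := S.simples_finite
  have hper : ∀ a ∈ Sp, ∃ k : ℕ, 1 ≤ k ∧ τ^[k] a = a := by
    intro a ha
    have : Finite ↥Sp := hfin.to_subtype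
    obtain ⟨i, j, hij, hfe⟩ := Finite.exists_ne_map_eq_of_infinite
      (fun n : ℕ => (⟨τ^[n] a, hiter n a ha⟩ : ↥Sp))
    have hfe' : τ^[i] a = τ^[j] a := congrArg Subtype.val hfe
    rcases hij.lt_or_gt with h | h
    · refine ⟨j - i, by omega, ?_⟩
      have hkey : τ^[i] (τ^[j - i] a) = τ^[i] a := by
        rw [← Function.iterate_add_apply, show i + (j - i) = j by omega]
        exact hfe'.symm
      exact hτinj.iterate i hkey
    · refine ⟨i - j, by omega, ?_⟩
      have hkey : τ^[j] (τ^[i - j] a) = τ^[j] a := by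
        rw [← Function.iterate_add_apply, show j + (i - j) = i by omega]
        exact hfe'
      exact hτinj.iterate j hkey
  set T := hfin.toFinset with hT
  set per : G → ℕ := fun a => if h : a ∈ Sp then (hper a h).choose else 1 with hperdef
  set M := T.prod per with hM
  have hM1 : 1 ≤ M := by
    apply Finset.one_le_prod'
    intro a _
    by_cases h : a ∈ Sp
    · simp only [hperdef, dif_pos h]
      exact (hper a h).choose_spec.1
    · simp [hperdef, dif_neg h]
  have hfix : ∀ a ∈ Sp, τ^[M] a = a := by
    intro a ha
    have hmemT : a ∈ T := by simpa [hT] using ha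
    obtain ⟨c, hc⟩ := Finset.dvd_prod_of_mem per hmemT
    have hspec : τ^[per a] a = a := by
      simp only [hperdef, dif_pos ha]
      exact (hper a ha).choose_spec.2
    rw [hM, hc, Function.iterate_mul]
    exact Function.iterate_fixed hspec c
  have hτpow : ∀ (n : ℕ) (g : G), τ^[n] g = (S.Δ ^ n)⁻¹ * g * S.Δ ^ n := by
    intro n
    induction n with
    | zero => intro g; simp
    | succ m ih =>
        intro g
        rw [Function.iterate_succ_apply', ih]
        simp [hτ, pow_succ, mul_inv_rev, mul_assoc]
  have key : ∀ a ∈ Sp, S.Δ ^ M * a = a * S.Δ ^ M := by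
    intro a ha
    have h := hfix a ha
    rw [hτpow] at h
    simpa [mul_assoc] using (congrArg (fun y => S.Δ ^ M * y) h).symm
  refine ⟨M, hM1, ?_⟩
  intro g
  have hg : g ∈ Subgroup.closure Sp := by
    rw [hSp, S.simples_generate]
    exact Subgroup.mem_top g
  induction hg using Subgroup.closure_induction with
  | mem a ha => exact key a ha
  | one => simp
  | mul a b _ _ iha ihb => rw [← mul_assoc, iha, mul_assoc, ihb, mul_assoc]
  | inv a _ iha =>
      have : Commute (S.Δ ^ M) a := iha
      exact this.inv_right

lemma conj_zpow (k : ℤ) {p : G} (hp : p ∈ S.P) : (S.Δ ^ k)⁻¹ * p * S.Δ ^ k ∈ S.P := by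
  obtain ⟨M, hM1, hMc⟩ := S.exists_central
  set n : ℕ := k.natAbs with hn
  have hcomm : ∀ g : G, S.Δ ^ (((n * M : ℕ) : ℤ)) * g = g * S.Δ ^ (((n * M : ℕ) : ℤ)) := by
    intro g
    have he : S.Δ ^ (((n * M : ℕ) : ℤ)) = (S.Δ ^ M) ^ n := by
      rw [zpow_natCast, pow_mul']
    rw [he]
    have hc : Commute (S.Δ ^ M) g := hMc g
    exact hc.pow_left n
  have hnn : (0 : ℤ) ≤ k + ((n * M : ℕ) : ℤ) := by
    have h1 : (n : ℤ) ≤ (n : ℤ) * M := le_mul_of_one_le_right (by positivity) (by exact_mod_cast hM1)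
    have h2 : -k ≤ (n : ℤ) := by omega
    push_cast
    linarith
  have heq : (S.Δ ^ (k + ((n * M : ℕ) : ℤ)))⁻¹ * p * S.Δ ^ (k + ((n * M : ℕ) : ℤ))
      = (S.Δ ^ k)⁻¹ * p * S.Δ ^ k := by
    set c := S.Δ ^ (((n * M : ℕ) : ℤ)) with hcdef
    set q := (S.Δ ^ k)⁻¹ * p * S.Δ ^ k with hq
    rw [zpow_add]
    have h1 : (S.Δ ^ k * c)⁻¹ * p * (S.Δ ^ k * c) = c⁻¹ * (q * c) := by
      simp [hq, mul_inv_rev, mul_assoc]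
    rw [h1, ← hcomm q, inv_mul_cancel_left]
  rw [← heq]
  rw [show k + ((n * M : ℕ) : ℤ) = (((k + ((n * M : ℕ) : ℤ)).toNat : ℕ) : ℤ) from
    (Int.toNat_of_nonneg hnn).symm, zpow_natCast]
  exact S.conj_pow _ hp

end Garside

open Garside in
theorem statement12 {G : Type*} [Group G] (S : Garside G) (x α β : G)
    (hα : α⁻¹ * x * α ∈ S.SSS x) (hβ : β⁻¹ * x * β ∈ S.SSS x) :
    (S.wedge α β)⁻¹ * x * S.wedge α β ∈ S.SSS x := by
  classical
  obtain ⟨hcα, hiα, hsα⟩ := hα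
  obtain ⟨hcβ, hiβ, hsβ⟩ := hβ
  set γ := S.wedge α β with hγ
  set s := S.inf (α⁻¹ * x * α) with hs
  set t := S.sup (α⁻¹ * x * α) with ht
  have hcγ : IsConj x (γ⁻¹ * x * γ) := by
    rw [isConj_iff]
    exact ⟨γ⁻¹, by group⟩
  have hsβle : s ≤ S.inf (β⁻¹ * x * β) := hiβ _ hcα
  have htβle : S.sup (β⁻¹ * x * β) ≤ t := hsβ _ hcα
  have hinfβ' : (S.Δ ^ s)⁻¹ * (β⁻¹ * x * β) ∈ S.P :=
    S.aux_le_trans (S.zpow_le_zpow' hsβle) (S.inf_le _)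
  have hsupβ' : (β⁻¹ * x * β)⁻¹ * S.Δ ^ t ∈ S.P :=
    S.aux_le_trans (S.le_sup _) (S.zpow_le_zpow' htβle)
  set w := S.wedge (x * α) (x * β) with hw
  -- inf part
  have h1 : (γ * S.Δ ^ s)⁻¹ * (α * S.Δ ^ s) ∈ S.P := by
    simpa [mul_inv_rev, mul_assoc] using S.conj_zpow s (S.wedge_le_left α β)
  have h1' : (α * S.Δ ^ s)⁻¹ * (x * α) ∈ S.P := by
    have := S.inf_le (α⁻¹ * x * α)
    rw [← hs] at this
    simpa [mul_inv_rev, mul_assoc] using this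
  have hle1 : (γ * S.Δ ^ s)⁻¹ * (x * α) ∈ S.P := S.aux_le_trans h1 h1'
  have h2 : (γ * S.Δ ^ s)⁻¹ * (β * S.Δ ^ s) ∈ S.P := by
    simpa [mul_inv_rev, mul_assoc] using S.conj_zpow s (S.wedge_le_right α β)
  have h2' : (β * S.Δ ^ s)⁻¹ * (x * β) ∈ S.P := by
    simpa [mul_inv_rev, mul_assoc] using hinfβ'
  have hle2 : (γ * S.Δ ^ s)⁻¹ * (x * β) ∈ S.P := S.aux_le_trans h2 h2'
  have hle3 : (γ * S.Δ ^ s)⁻¹ * w ∈ S.P := S.le_wedge _ _ _ hle1 hle2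
  have hw1 : (x⁻¹ * w)⁻¹ * α ∈ S.P := by
    simpa [mul_inv_rev, mul_assoc] using S.wedge_le_left (x * α) (x * β)
  have hw2 : (x⁻¹ * w)⁻¹ * β ∈ S.P := by
    simpa [mul_inv_rev, mul_assoc] using S.wedge_le_right (x * α) (x * β)
  have hw3 : (x⁻¹ * w)⁻¹ * γ ∈ S.P := S.le_wedge _ _ _ hw1 hw2
  have hwle : w⁻¹ * (x * γ) ∈ S.P := by
    simpa [mul_inv_rev, mul_assoc] using hw3
  have hinfγ : (S.Δ ^ s)⁻¹ * (γ⁻¹ * x * γ) ∈ S.P := by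
    simpa [mul_inv_rev, mul_assoc] using S.aux_le_trans hle3 hwle
  have hsγinf : s ≤ S.inf (γ⁻¹ * x * γ) := S.inf_max _ s hinfγ
  -- sup part
  have j1' : (x * α)⁻¹ * (α * S.Δ ^ t) ∈ S.P := by
    have := S.le_sup (α⁻¹ * x * α)
    rw [← ht] at this
    simpa [mul_inv_rev, mul_assoc] using this
  have k1 : w⁻¹ * (α * S.Δ ^ t) ∈ S.P := S.aux_le_trans (S.wedge_le_left _ _) j1'
  have j2' : (x * β)⁻¹ * (β * S.Δ ^ t) ∈ S.P := by
    simpa [mul_inv_rev, mul_assoc] using hsupβ'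
  have k2 : w⁻¹ * (β * S.Δ ^ t) ∈ S.P := S.aux_le_trans (S.wedge_le_right _ _) j2'
  have k1' : (w * S.Δ ^ (-t))⁻¹ * α ∈ S.P := by
    simpa [mul_inv_rev, mul_assoc, zpow_neg] using S.conj_zpow (-t) k1
  have k2' : (w * S.Δ ^ (-t))⁻¹ * β ∈ S.P := by
    simpa [mul_inv_rev, mul_assoc, zpow_neg] using S.conj_zpow (-t) k2
  have k3 : (w * S.Δ ^ (-t))⁻¹ * γ ∈ S.P := S.le_wedge _ _ _ k1' k2'
  have k4 : w⁻¹ * (γ * S.Δ ^ t) ∈ S.P := by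
    simpa [mul_inv_rev, mul_assoc, zpow_neg] using S.conj_zpow t k3
  have k5 : (x * γ)⁻¹ * w ∈ S.P := by
    have hxa : (x * γ)⁻¹ * (x * α) ∈ S.P := by
      simpa [mul_inv_rev, mul_assoc] using S.wedge_le_left α β
    have hxb : (x * γ)⁻¹ * (x * β) ∈ S.P := by
      simpa [mul_inv_rev, mul_assoc] using S.wedge_le_right α β
    exact S.le_wedge _ _ _ hxa hxb
  have k6 : (x * γ)⁻¹ * (γ * S.Δ ^ t) ∈ S.P := S.aux_le_trans k5 k4
  have hsupγ : (γ⁻¹ * x * γ)⁻¹ * S.Δ ^ t ∈ S.P := by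
    simpa [mul_inv_rev, mul_assoc] using k6
  have hsγsup : S.sup (γ⁻¹ * x * γ) ≤ t := S.sup_min _ t hsupγ
  exact ⟨hcγ, fun z hz => (hiα z hz).trans hsγinf, fun z hz => hsγsup.trans (hsα z hz)⟩


end GarsidePaper
end
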